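/- Let A₁ be an n×m matrix and A₂ a p×q matrix over a commutative ring, and let A be the block diagonal matrix diag(A₁, A₂) of size (n+p)×(m+q). Then the ideal generated by the (m+q−1)-minors of A equals the sum of the ideal (generated by products of ((m−1)-minors of A₁ with q-minors of A₂)) and the ideal (generated by products of (m-minors of A₁ with (q−1)-minors of A₂)). -/

import Mathlib

/-!
A minor of `diag(A₁, A₂)` chooses rows and columns in both blocks. Each term of its
permutation expansion pairs rows of one block with columns of the same block, so the minor
vanishes unless it takes as many rows as columns from `A₁`; in that case it is, up to sign, a
`t`-minor of `A₁` times an `(s - t)`-minor of `A₂`, and every such product arises this way.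
Hence the `s`-minors of `diag(A₁, A₂)` generate `∑_{a + b = s} I_a(A₁) I_b(A₂)`. For
`s = m + q - 1` the terms with `a > m` or `b > q` vanish, leaving `(m - 1, q)` and `(m, q - 1)`;
the truncated subtraction at `m = 0` or `q = 0` is absorbed by `I_{k+1} ≤ I_k`.
-/

/-- The ideal generated by the `s`-minors of a matrix: minors of order larger
than the size are taken to be `0` (no such minors exist), and `0`-minors are
taken to be `1` (the determinant of the empty matrix). -/
def minorsIdeal {R : Type} [CommRing R] {ι κ : Type} [Fintype ι] [Fintype κ]
    (A : Matrix ι κ R) (s : ℕ) : Ideal R :=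
  Ideal.span {x | ∃ (f : Fin s → ι) (g : Fin s → κ),
    Function.Injective f ∧ Function.Injective g ∧ x = (A.submatrix f g).det}

open Matrix Function Equiv Finset.HasAntidiagonal

variable {R : Type} [CommRing R]

section Minors

variable {ι κ : Type} [Fintype ι] [Fintype κ] (A : Matrix ι κ R)

theorem det_submatrix_mem_minorsIdeal {α : Type} [Fintype α] [DecidableEq α] {u : α → ι}
    {v : α → κ} (hu : Injective u) (hv : Injective v) :
    (A.submatrix u v).det ∈ minorsIdeal A (Fintype.card α) := by
  let e := Fintype.equivFin α
  rw [← det_submatrix_equiv_self e.symm, submatrix_submatrix]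
  exact Ideal.subset_span ⟨u ∘ e.symm, v ∘ e.symm, hu.comp e.symm.injective,
    hv.comp e.symm.injective, rfl⟩

theorem minorsIdeal_succ_le (k : ℕ) : minorsIdeal A (k + 1) ≤ minorsIdeal A k := by
  refine Ideal.span_le.mpr ?_
  rintro _ ⟨f, g, hf, hg, rfl⟩
  rw [det_succ_row_zero]
  refine Ideal.sum_mem _ fun j _ => Ideal.mul_mem_left _ _ ?_
  rw [submatrix_submatrix]
  simpa using det_submatrix_mem_minorsIdeal A (hf.comp (Fin.succ_injective k))
    (hg.comp Fin.succAbove_right_injective)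

theorem antitone_minorsIdeal : Antitone (minorsIdeal A) :=
  antitone_nat_of_succ_le (minorsIdeal_succ_le A)

theorem minorsIdeal_eq_bot_of_card_lt {k : ℕ} (hk : Fintype.card κ < k) :
    minorsIdeal A k = ⊥ := by
  refine Ideal.span_eq_bot.mpr ?_
  rintro _ ⟨f, g, hf, hg, rfl⟩
  exact absurd (by simpa using Fintype.card_le_of_injective g hg) hk.not_ge

end Minors

section BlockPattern

variable {α : Type} [Fintype α] [DecidableEq α] {N : Matrix α α R} {P Q : α → Prop}
  [DecidablePred P] [DecidablePred Q]

theorem det_eq_zero_of_card_ne (hN : ∀ i j, (P i ↔ ¬Q j) → N i j = 0)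
    (hPQ : Fintype.card {i // P i} ≠ Fintype.card {j // Q j}) : N.det = 0 := by
  refine (det_apply' N).trans (Finset.sum_eq_zero fun σ _ => ?_)
  by_cases hσ : ∀ j, Q j ↔ P (σ j)
  · exact absurd (Fintype.card_congr (σ.subtypeEquiv hσ)).symm hPQ
  · obtain ⟨j, hj⟩ := not_forall.mp hσ
    exact mul_eq_zero_of_right _ (Finset.prod_eq_zero (Finset.mem_univ j) (hN _ _ (by tauto)))

theorem det_eq_units_mul_det_mul_det (hN : ∀ i j, (P i ↔ ¬Q j) → N i j = 0)
    (φ₁ : {i // P i} ≃ {j // Q j}) (φ₂ : {i // ¬P i} ≃ {j // ¬Q j}) :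
    ∃ ε : ℤˣ, N.det = ε * ((N.submatrix (↑) ((↑) ∘ φ₁)).det *
      (N.submatrix (↑) ((↑) ∘ φ₂)).det) := by
  let σ : Perm α := (sumCompl P).symm.trans ((φ₁.sumCongr φ₂).trans (sumCompl Q))
  have hblock : (N.submatrix id σ).submatrix (sumCompl P) (sumCompl P) =
      fromBlocks (N.submatrix (↑) ((↑) ∘ φ₁)) 0 0 (N.submatrix (↑) ((↑) ∘ φ₂)) := by
    ext (i | i) (j | j) <;> simp [σ]
    · exact hN _ _ (by simp [i.2, (φ₂ j).2])
    · exact hN _ _ (by simp [i.2, (φ₁ j).2])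
  refine ⟨Perm.sign σ, ?_⟩
  rw [← det_fromBlocks_zero₂₁, ← hblock, det_submatrix_equiv_self, det_permute', ← mul_assoc,
    ← Int.cast_mul, ← Units.val_mul, Int.units_mul_self]
  simp

end BlockPattern

section BlockDiagonal

variable {ι₁ ι₂ κ₁ κ₂ : Type} {α : Type} [Fintype α] [DecidableEq α]
  {u : α → ι₁ ⊕ ι₂} {v : α → κ₁ ⊕ κ₂}

theorem det_submatrix_mem_minorsIdeal_toBlocks₁₁ [Fintype ι₁] [Fintype κ₁]
    (A : Matrix (ι₁ ⊕ ι₂) (κ₁ ⊕ κ₂) R) (hu : Injective u) (hv : Injective v)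
    (hul : ∀ a, (u a).isLeft) (hvl : ∀ a, (v a).isLeft) :
    (A.submatrix u v).det ∈ minorsIdeal A.toBlocks₁₁ (Fintype.card α) := by
  choose u₁ hu₁ using fun a => Sum.isLeft_iff.mp (hul a)
  choose v₁ hv₁ using fun a => Sum.isLeft_iff.mp (hvl a)
  have hsub : A.submatrix u v = A.toBlocks₁₁.submatrix u₁ v₁ := by
    ext a b; simp [hu₁, hv₁, toBlocks₁₁]
  rw [hsub]
  exact det_submatrix_mem_minorsIdeal _ (fun a b h => hu (by rw [hu₁, hu₁, h]))
    (fun a b h => hv (by rw [hv₁, hv₁, h]))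

theorem det_submatrix_mem_minorsIdeal_toBlocks₂₂ [Fintype ι₂] [Fintype κ₂]
    (A : Matrix (ι₁ ⊕ ι₂) (κ₁ ⊕ κ₂) R) (hu : Injective u) (hv : Injective v)
    (hur : ∀ a, (u a).isRight) (hvr : ∀ a, (v a).isRight) :
    (A.submatrix u v).det ∈ minorsIdeal A.toBlocks₂₂ (Fintype.card α) := by
  choose u₂ hu₂ using fun a => Sum.isRight_iff.mp (hur a)
  choose v₂ hv₂ using fun a => Sum.isRight_iff.mp (hvr a)
  have hsub : A.submatrix u v = A.toBlocks₂₂.submatrix u₂ v₂ := by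
    ext a b; simp [hu₂, hv₂, toBlocks₂₂]
  rw [hsub]
  exact det_submatrix_mem_minorsIdeal _ (fun a b h => hu (by rw [hu₂, hu₂, h]))
    (fun a b h => hv (by rw [hv₂, hv₂, h]))

variable [Fintype ι₁] [Fintype ι₂] [Fintype κ₁] [Fintype κ₂]
  (A₁ : Matrix ι₁ κ₁ R) (A₂ : Matrix ι₂ κ₂ R)

theorem minorsIdeal_mul_le_minorsIdeal_fromBlocks (a b : ℕ) :
    minorsIdeal A₁ a * minorsIdeal A₂ b ≤ minorsIdeal (fromBlocks A₁ 0 0 A₂) (a + b) := by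
  refine (Ideal.span_mul_span' _ _).trans_le (Ideal.span_le.mpr (Set.mul_subset_iff.mpr ?_))
  rintro _ ⟨f₁, g₁, hf₁, hg₁, rfl⟩ _ ⟨f₂, g₂, hf₂, hg₂, rfl⟩
  have hblock : fromBlocks (A₁.submatrix f₁ g₁) 0 0 (A₂.submatrix f₂ g₂) =
      (fromBlocks A₁ 0 0 A₂).submatrix (Sum.map f₁ f₂) (Sum.map g₁ g₂) := by
    ext (i | i) (j | j) <;> rfl
  rw [← det_fromBlocks_zero₂₁, hblock]
  simpa using det_submatrix_mem_minorsIdeal _ (hf₁.sumMap hf₂) (hg₁.sumMap hg₂)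

theorem det_submatrix_fromBlocks_zero_zero_mem_sup {s : ℕ} {f : Fin s → ι₁ ⊕ ι₂}
    {g : Fin s → κ₁ ⊕ κ₂} (hf : Injective f) (hg : Injective g) :
    ((fromBlocks A₁ 0 0 A₂).submatrix f g).det ∈
      (antidiagonal s).sup fun ab => minorsIdeal A₁ ab.1 * minorsIdeal A₂ ab.2 := by
  set N := (fromBlocks A₁ 0 0 A₂).submatrix f g
  let P : Fin s → Prop := fun i => (f i).isLeft
  let Q : Fin s → Prop := fun j => (g j).isLeft
  have hN : ∀ i j, (P i ↔ ¬Q j) → N i j = 0 := by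
    intro i j
    simp only [N, P, Q, submatrix_apply]
    rcases f i with a | a <;> rcases g j with b | b <;> simp
  have hcard : ∀ p : Fin s → Prop, [DecidablePred p] →
      Fintype.card {i // p i} + Fintype.card {i // ¬p i} = s := fun p _ => by
    simpa using Fintype.card_congr (sumCompl p)
  by_cases hPQ : Fintype.card {i // P i} = Fintype.card {j // Q j}
  · have hPQ' : Fintype.card {i // ¬P i} = Fintype.card {j // ¬Q j} := by
      have := hcard P; have := hcard Q; omega
    obtain ⟨ε, hε⟩ := det_eq_units_mul_det_mul_det hN (Fintype.equivOfCardEq hPQ)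
      (Fintype.equivOfCardEq hPQ')
    rw [hε]
    refine Ideal.mul_mem_left _ _ (Finset.le_sup (f := fun ab => minorsIdeal A₁ ab.1 *
      minorsIdeal A₂ ab.2) (b := (_, _)) (mem_antidiagonal.mpr (hcard P))
      (Ideal.mul_mem_mul ?_ ?_))
    · have h := det_submatrix_mem_minorsIdeal_toBlocks₁₁ (fromBlocks A₁ 0 0 A₂)
        (hf.comp Subtype.val_injective) (hg.comp (Subtype.val_injective.comp (Equiv.injective _)))
        (fun i => i.2) (fun j => (Fintype.equivOfCardEq hPQ j).2)
      rwa [toBlocks_fromBlocks₁₁] at h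
    · have h := det_submatrix_mem_minorsIdeal_toBlocks₂₂ (fromBlocks A₁ 0 0 A₂)
        (hf.comp Subtype.val_injective) (hg.comp (Subtype.val_injective.comp (Equiv.injective _)))
        (fun i => Sum.not_isLeft.mp i.2)
        (fun j => Sum.not_isLeft.mp (Fintype.equivOfCardEq hPQ' j).2)
      rwa [toBlocks_fromBlocks₂₂] at h
  · rw [det_eq_zero_of_card_ne hN hPQ]
    exact zero_mem _

theorem minorsIdeal_fromBlocks_zero_zero_eq_sup (s : ℕ) :
    minorsIdeal (fromBlocks A₁ 0 0 A₂) s =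
      (antidiagonal s).sup fun ab => minorsIdeal A₁ ab.1 * minorsIdeal A₂ ab.2 := by
  refine le_antisymm (Ideal.span_le.mpr ?_) (Finset.sup_le fun ab hab => ?_)
  · rintro _ ⟨f, g, hf, hg, rfl⟩
    exact det_submatrix_fromBlocks_zero_zero_mem_sup A₁ A₂ hf hg
  · rw [← mem_antidiagonal.mp hab]
    exact minorsIdeal_mul_le_minorsIdeal_fromBlocks A₁ A₂ _ _

end BlockDiagonal

/-- For a block diagonal matrix `A = diag(A₁, A₂)` with `A₁` of size `n × m`
and `A₂` of size `p × q`, the ideal generated by the `(m+q−1)`-minors of `A`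
equals the sum of the ideal generated by products of `(m−1)`-minors of `A₁`
with `q`-minors of `A₂`, and the ideal generated by products of `m`-minors of
`A₁` with `(q−1)`-minors of `A₂`. -/
theorem stmt6 {R : Type} [CommRing R] {n m p q : ℕ}
    (A₁ : Matrix (Fin n) (Fin m) R) (A₂ : Matrix (Fin p) (Fin q) R) :
    minorsIdeal (Matrix.fromBlocks A₁ 0 0 A₂) (m + q - 1) =
      minorsIdeal A₁ (m - 1) * minorsIdeal A₂ q +
        minorsIdeal A₁ m * minorsIdeal A₂ (q - 1) := by
  rw [Submodule.add_eq_sup]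
  refine le_antisymm ?_ (sup_le ?_ ?_)
  · rw [minorsIdeal_fromBlocks_zero_zero_eq_sup]
    refine Finset.sup_le fun ⟨a, b⟩ hab => ?_
    rw [mem_antidiagonal] at hab
    rcases lt_or_ge m a with ha | ha
    · simp [minorsIdeal_eq_bot_of_card_lt A₁ (by simpa using ha)]
    rcases lt_or_ge q b with hb | hb
    · simp [minorsIdeal_eq_bot_of_card_lt A₂ (by simpa using hb)]
    obtain ⟨rfl, rfl⟩ | ⟨rfl, rfl⟩ : (a = m - 1 ∧ b = q) ∨ (a = m ∧ b = q - 1) := by omega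
    · exact le_sup_left
    · exact le_sup_right
  · exact (minorsIdeal_mul_le_minorsIdeal_fromBlocks A₁ A₂ _ _).trans
      (antitone_minorsIdeal _ (by omega))
  · exact (minorsIdeal_mul_le_minorsIdeal_fromBlocks A₁ A₂ _ _).trans
      (antitone_minorsIdeal _ (by omega))
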